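/- Let Γ be a bounded Borel subset of ℝ^d with |Γ| > 0 such that |∂_r(Γ)| = O(r) as r ↓ 0, and fix α > 0. For λ > 1 let Γ^bd := {x ∈ Γ : d_∞(x, ∂Γ) ≤ α λ^{-1/d} log λ}. Then n_λ(Γ^bd) − λ|Γ^bd| = O(λ^{(d−1)/d} log λ) as λ → ∞; that is, there exist C ∈ (0,∞) and λ_0 > 1 such that for all λ ≥ λ_0, 0 ≤ n_λ(Γ^bd) − λ|Γ^bd| ≤ C λ^{(d−1)/d} log λ. -/

import Mathlib

/-!
Rounding every point of `λ^{1/d} B` to the nearest lattice point shows that the cubes indexed by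
`Z_λ(B)` cover `λ^{1/d} B`, so `λ |B| ≤ n_λ(B)`. Conversely, the open balls of radius `1/2`
(in the sup norm) around the points of `Z_λ(B)` are disjoint, have unit volume and lie in the
dilate of the `λ^{-1/d}`-thickening of `B`. For `B = Γ^bd` that thickening lies in
`∂_{s_λ + λ^{-1/d}}(Γ)`, whose volume is `O(s_λ + λ^{-1/d}) = O(λ^{-1/d} log λ)` by the regularity
of `∂Γ`; multiplying by `λ` gives the upper bound.
-/

open MeasureTheory Metric Set Pointwise

noncomputable section

/-- The closed axis-aligned unit cube `x + [-1/2,1/2]^d` in `ℝ^d` (with the sup norm,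
this is the closed ball of radius `1/2` around `x`). -/
def unitCube {d : ℕ} (x : Fin d → ℝ) : Set (Fin d → ℝ) :=
  Metric.closedBall x (1 / 2)

/-- `∂_r(B)`: the set of points within `ℓ_∞`-distance `r` of the topological boundary of `B`
(distance to the empty set being `+∞`). -/
def bdryNbhd {d : ℕ} (r : ℝ) (B : Set (Fin d → ℝ)) : Set (Fin d → ℝ) :=
  {x | EMetric.infEdist x (frontier B) ≤ ENNReal.ofReal r}

/-- The dilation `λ^{1/d} B`. -/
def dilate {d : ℕ} (lam : ℝ) (B : Set (Fin d → ℝ)) : Set (Fin d → ℝ) :=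
  (lam ^ (1 / (d : ℝ))) • B

/-- `Z_λ(B)`: the lattice points whose unit cube meets `λ^{1/d} B`. -/
def Zlat {d : ℕ} (lam : ℝ) (B : Set (Fin d → ℝ)) : Set (Fin d → ℤ) :=
  {z | (unitCube (fun i => (z i : ℝ)) ∩ dilate lam B).Nonempty}

/-- `n_λ(B)`: the number of cubes in the covering of `λ^{1/d} B`. -/
def nlat {d : ℕ} (lam : ℝ) (B : Set (Fin d → ℝ)) : ℕ :=
  (Zlat lam B).ncard

/-- The `s`-boundary region of `Γ`: points of `Γ` within `ℓ_∞`-distance `s` of `∂Γ`. -/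
def bdRegion {d : ℕ} (s : ℝ) (Γ : Set (Fin d → ℝ)) : Set (Fin d → ℝ) :=
  Γ ∩ bdryNbhd s Γ

open Filter Bornology
open scoped ENNReal Topology

lemma isometry_intCast_pi (ι : Type*) [Fintype ι] :
    Isometry (fun (z : ι → ℤ) i => (z i : ℝ)) :=
  Isometry.piMap (fun _ => Int.cast) fun _ => Isometry.of_dist_eq Int.dist_cast_real

lemma volume_unitCube {d : ℕ} (x : Fin d → ℝ) : volume (unitCube x) = 1 := by
  simp [unitCube]

lemma pairwise_disjoint_ball_intCast {ι : Type*} [Fintype ι] :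
    Pairwise fun z w : ι → ℤ =>
      Disjoint (ball (fun i => (z i : ℝ)) (1 / 2)) (ball (fun i => (w i : ℝ)) (1 / 2)) := by
  intro z w hzw
  apply ball_disjoint_ball
  have hdist : 1 ≤ dist z w := by
    obtain ⟨i, hi⟩ := Function.ne_iff.mp hzw
    calc (1 : ℝ) ≤ dist (z i) (w i) := by
          rw [Int.dist_eq]; exact_mod_cast Int.one_le_abs (sub_ne_zero.mpr hi)
      _ ≤ dist z w := dist_le_pi_dist z w i
  rw [(isometry_intCast_pi ι).dist_eq]
  linarith

lemma volume_dilate {d : ℕ} (hd : d ≠ 0) {lam : ℝ} (hlam : 0 < lam) (S : Set (Fin d → ℝ)) :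
    volume (dilate lam S) = ENNReal.ofReal lam * volume S := by
  rw [dilate, Measure.addHaar_smul, Module.finrank_fin_fun, ← Real.rpow_natCast,
    ← Real.rpow_mul hlam.le, one_div_mul_cancel (by exact_mod_cast hd), Real.rpow_one,
    abs_of_pos hlam]

lemma Zlat_finite {d : ℕ} {lam : ℝ} {B : Set (Fin d → ℝ)} (hB : IsBounded B) :
    (Zlat lam B).Finite := by
  have hsub : Zlat lam B ⊆
      (fun (z : Fin d → ℤ) i => (z i : ℝ)) ⁻¹' cthickening (1 / 2) (dilate lam B) :=
    fun z ⟨p, hpz, hp⟩ => mem_cthickening_of_dist_le _ p _ _ hp (by rw [dist_comm]; exact hpz)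
  have hbdd : IsBounded (Zlat lam B) :=
    ((isometry_intCast_pi (Fin d)).antilipschitz.isBounded_preimage
      ((hB.smul₀ _).cthickening)).subset hsub
  exact hbdd.isCompact_closure.finite_of_discrete.subset subset_closure

lemma dilate_subset_biUnion_unitCube {d : ℕ} (lam : ℝ) (B : Set (Fin d → ℝ)) :
    dilate lam B ⊆ ⋃ z ∈ Zlat lam B, unitCube (fun i => (z i : ℝ)) := by
  intro x hx
  have hx_cube : x ∈ unitCube (fun i => (round (x i) : ℝ)) :=
    (dist_pi_le_iff (by norm_num)).mpr fun i => by rw [Real.dist_eq]; exact abs_sub_round (x i)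
  exact mem_biUnion (x := fun i => round (x i)) ⟨x, hx_cube, hx⟩ hx_cube

lemma mul_volume_le_nlat {d : ℕ} (hd : d ≠ 0) {lam : ℝ} (hlam : 0 < lam)
    {B : Set (Fin d → ℝ)} (hB : IsBounded B) :
    lam * (volume B).toReal ≤ nlat lam B := by
  have hfin := Zlat_finite (lam := lam) hB
  have h : ENNReal.ofReal lam * volume B ≤ nlat lam B :=
    calc ENNReal.ofReal lam * volume B = volume (dilate lam B) := (volume_dilate hd hlam B).symm
      _ ≤ volume (⋃ z ∈ hfin.toFinset, unitCube (fun i => (z i : ℝ))) :=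
          measure_mono (by simpa using dilate_subset_biUnion_unitCube lam B)
      _ ≤ ∑ z ∈ hfin.toFinset, volume (unitCube (fun i => (z i : ℝ))) :=
          measure_biUnion_finset_le _ _
      _ = nlat lam B := by simp [volume_unitCube, nlat, ncard_eq_toFinset_card _ hfin]
  simpa [ENNReal.toReal_mul, hlam.le] using ENNReal.toReal_mono (ENNReal.natCast_ne_top _) h

lemma ball_subset_dilate_cthickening {d : ℕ} {lam : ℝ} (hlam : 0 < lam)
    {B : Set (Fin d → ℝ)} {z : Fin d → ℤ} (hz : z ∈ Zlat lam B) :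
    ball (fun i => (z i : ℝ)) (1 / 2) ⊆ dilate lam (cthickening (lam ^ (-(1 / (d : ℝ)))) B) := by
  intro y hy
  obtain ⟨p, hpz, hp⟩ := hz
  set c := lam ^ (1 / (d : ℝ))
  have hc : 0 < c := Real.rpow_pos_of_pos hlam _
  rw [dilate, mem_smul_set_iff_inv_smul_mem₀ hc.ne'] at hp ⊢
  refine mem_cthickening_of_dist_le _ _ _ _ hp ?_
  have hyp : dist y p ≤ 1 := by
    linarith [dist_triangle_right y p (fun i => (z i : ℝ)), mem_ball.mp hy, mem_closedBall.mp hpz]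
  rw [dist_smul₀, norm_inv, Real.norm_of_nonneg hc.le, Real.rpow_neg hlam.le]
  exact mul_le_of_le_one_right (by positivity) hyp

lemma nlat_le_mul_volume_cthickening {d : ℕ} (hd : d ≠ 0) {lam : ℝ} (hlam : 0 < lam)
    {B : Set (Fin d → ℝ)} (hB : IsBounded B) :
    (nlat lam B : ℝ) ≤ lam * (volume (cthickening (lam ^ (-(1 / (d : ℝ)))) B)).toReal := by
  have hfin := Zlat_finite (lam := lam) hB
  set A := cthickening (lam ^ (-(1 / (d : ℝ)))) B
  have h : (nlat lam B : ℝ≥0∞) ≤ ENNReal.ofReal lam * volume A :=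
    calc (nlat lam B : ℝ≥0∞)
        = ∑ z ∈ hfin.toFinset, volume (ball (fun i => (z i : ℝ)) (1 / 2)) := by
          simp [nlat, ncard_eq_toFinset_card _ hfin]
      _ = volume (⋃ z ∈ hfin.toFinset, ball (fun i => (z i : ℝ)) (1 / 2)) :=
          (measure_biUnion_finset (fun z _ w _ hzw => pairwise_disjoint_ball_intCast hzw)
            fun _ _ => measurableSet_ball).symm
      _ ≤ volume (dilate lam A) := measure_mono <| iUnion₂_subset fun z hz =>
          ball_subset_dilate_cthickening hlam (hfin.mem_toFinset.mp hz)
      _ = ENNReal.ofReal lam * volume A := volume_dilate hd hlam A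
  have hA : volume A ≠ ⊤ := hB.cthickening.measure_lt_top.ne
  simpa [ENNReal.toReal_mul, hlam.le] using
    ENNReal.toReal_mono (ENNReal.mul_ne_top ENNReal.ofReal_ne_top hA) h

lemma isBounded_bdryNbhd {d : ℕ} (r : ℝ) {Γ : Set (Fin d → ℝ)} (hΓ : IsBounded Γ) :
    IsBounded (bdryNbhd r Γ) :=
  (hΓ.closure.subset frontier_subset_closure).cthickening

lemma cthickening_bdryNbhd_subset {d : ℕ} {s t : ℝ} (hs : 0 ≤ s) (ht : 0 ≤ t)
    (Γ : Set (Fin d → ℝ)) : cthickening t (bdryNbhd s Γ) ⊆ bdryNbhd (s + t) Γ := by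
  rw [add_comm]
  exact cthickening_cthickening_subset ht hs _

lemma nlat_bdRegion_le {d : ℕ} (hd : d ≠ 0) {lam s : ℝ} (hlam : 0 < lam) (hs : 0 ≤ s)
    {Γ : Set (Fin d → ℝ)} (hΓ : IsBounded Γ) :
    (nlat lam (bdRegion s Γ) : ℝ) ≤
      lam * (volume (bdryNbhd (s + lam ^ (-(1 / (d : ℝ)))) Γ)).toReal := by
  have ht : 0 ≤ lam ^ (-(1 / (d : ℝ))) := Real.rpow_nonneg hlam.le _
  have hsub : bdRegion s Γ ⊆ bdryNbhd s Γ := inter_subset_right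
  have hthick := (cthickening_subset_of_subset _ hsub).trans (cthickening_bdryNbhd_subset hs ht Γ)
  have hfin : volume (bdryNbhd (s + lam ^ (-(1 / (d : ℝ)))) Γ) ≠ ⊤ :=
    (isBounded_bdryNbhd _ hΓ).measure_lt_top.ne
  exact (nlat_le_mul_volume_cthickening hd hlam (hΓ.subset inter_subset_left)).trans <|
    mul_le_mul_of_nonneg_left (ENNReal.toReal_mono hfin (measure_mono hthick)) hlam.le

lemma tendsto_rpow_neg_mul_log_atTop {r : ℝ} (hr : 0 < r) :
    Tendsto (fun x : ℝ => x ^ (-r) * Real.log x) atTop (𝓝 0) :=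
  (isLittleO_log_rpow_atTop hr).tendsto_div_nhds_zero.congr' <|
    (eventually_gt_atTop 0).mono fun x hx => by
      simp only [Real.rpow_neg hx.le, div_eq_inv_mul]

lemma tendsto_boundary_width_atTop {d : ℝ} (hd : 0 < d) (α : ℝ) :
    Tendsto (fun x : ℝ => α * x ^ (-(1 / d)) * Real.log x + x ^ (-(1 / d))) atTop (𝓝 0) := by
  have hr : 0 < 1 / d := by positivity
  simpa [mul_assoc] using
    ((tendsto_rpow_neg_mul_log_atTop hr).const_mul α).add (tendsto_rpow_neg_atTop hr)

lemma mul_rpow_neg_one_div {x : ℝ} (hx : 0 < x) {d : ℝ} (hd : d ≠ 0) :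
    x * x ^ (-(1 / d)) = x ^ ((d - 1) / d) := by
  rw [show (d - 1) / d = 1 + -(1 / d) by field_simp; ring, Real.rpow_add hx, Real.rpow_one]

theorem covering_count_boundary_region_general (d : ℕ) (hd : 1 ≤ d)
    (Γ : Set (Fin d → ℝ)) (hbdd : Bornology.IsBounded Γ)
    (hreg : ∃ C₀ r₀ : ℝ, 0 < C₀ ∧ 0 < r₀ ∧ ∀ r : ℝ, 0 < r → r ≤ r₀ →
      (volume (bdryNbhd r Γ)).toReal ≤ C₀ * r)
    (α : ℝ) (hα : 0 < α) :
    ∃ C : ℝ, 0 < C ∧ ∃ lam₀ : ℝ, 1 < lam₀ ∧ ∀ lam : ℝ, lam₀ ≤ lam →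
      lam * (volume (bdRegion (α * lam ^ (-(1 / (d : ℝ))) * Real.log lam) Γ)).toReal
          ≤ (nlat lam (bdRegion (α * lam ^ (-(1 / (d : ℝ))) * Real.log lam) Γ) : ℝ) ∧
      (nlat lam (bdRegion (α * lam ^ (-(1 / (d : ℝ))) * Real.log lam) Γ) : ℝ)
          - lam * (volume (bdRegion (α * lam ^ (-(1 / (d : ℝ))) * Real.log lam) Γ)).toReal
        ≤ C * lam ^ (((d : ℝ) - 1) / d) * Real.log lam := by
  obtain ⟨C₀, r₀, hC₀, hr₀, hreg⟩ := hreg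
  have hd0 : d ≠ 0 := by omega
  have hwidth := tendsto_boundary_width_atTop (d := d) (by positivity) α
  obtain ⟨lam₀, hlam₀⟩ := eventually_atTop.mp
    ((hwidth.eventually_le_const hr₀).and (Real.tendsto_log_atTop.eventually_ge_atTop 1))
  refine ⟨C₀ * (α + 1), by positivity, max lam₀ 2, by simp, fun lam hle => ?_⟩
  obtain ⟨hsmall, hlog⟩ := hlam₀ lam (le_of_max_le_left hle)
  have hlam : 0 < lam := by linarith [le_max_right lam₀ 2, hle]
  set t := lam ^ (-(1 / (d : ℝ)))
  set s := α * t * Real.log lam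
  have ht : 0 < t := Real.rpow_pos_of_pos hlam _
  have hs : 0 ≤ s := by positivity
  refine ⟨mul_volume_le_nlat hd0 hlam (hbdd.subset inter_subset_left), ?_⟩
  have hvol := hreg (s + t) (by positivity) hsmall
  calc (nlat lam (bdRegion s Γ) : ℝ) - lam * (volume (bdRegion s Γ)).toReal
      ≤ lam * (volume (bdryNbhd (s + t) Γ)).toReal := by
        have hvol_nonneg : 0 ≤ lam * (volume (bdRegion s Γ)).toReal := by positivity
        linarith [nlat_bdRegion_le hd0 hlam hs hbdd]
    _ ≤ lam * (C₀ * (s + t)) := by gcongr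
    _ = C₀ * (α * Real.log lam + 1) * (lam * t) := by ring
    _ ≤ C₀ * (α + 1) * lam ^ (((d : ℝ) - 1) / d) * Real.log lam := by
        rw [mul_rpow_neg_one_div hlam (by exact_mod_cast hd0)]
        have hP : 0 < lam ^ (((d : ℝ) - 1) / d) := Real.rpow_pos_of_pos hlam _
        nlinarith [mul_nonneg (mul_pos hC₀ hP).le (sub_nonneg.2 hlog)]

theorem covering_count_boundary_region (d : ℕ) (hd : 1 ≤ d)
    (Γ : Set (Fin d → ℝ)) (hbdd : Bornology.IsBounded Γ) (hmeas : MeasurableSet Γ)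
    (hpos : 0 < volume Γ)
    (hreg : ∃ C₀ r₀ : ℝ, 0 < C₀ ∧ 0 < r₀ ∧ ∀ r : ℝ, 0 < r → r ≤ r₀ →
      (volume (bdryNbhd r Γ)).toReal ≤ C₀ * r)
    (α : ℝ) (hα : 0 < α) :
    ∃ C : ℝ, 0 < C ∧ ∃ lam₀ : ℝ, 1 < lam₀ ∧ ∀ lam : ℝ, lam₀ ≤ lam →
      lam * (volume (bdRegion (α * lam ^ (-(1 / (d : ℝ))) * Real.log lam) Γ)).toReal
          ≤ (nlat lam (bdRegion (α * lam ^ (-(1 / (d : ℝ))) * Real.log lam) Γ) : ℝ) ∧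
      (nlat lam (bdRegion (α * lam ^ (-(1 / (d : ℝ))) * Real.log lam) Γ) : ℝ)
          - lam * (volume (bdRegion (α * lam ^ (-(1 / (d : ℝ))) * Real.log lam) Γ)).toReal
        ≤ C * lam ^ (((d : ℝ) - 1) / d) * Real.log lam :=
  covering_count_boundary_region_general d hd Γ hbdd hreg α hα
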